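/- Let n ≥ 1, let P and M be real symmetric positive definite n×n matrices, γ > 0, ρ ∈ (0,1), θ ≥ 0, C' ≥ 0, ϖ ≥ 0. Let (x_k)_{k∈ℕ} in ℝ^n, (Φ_k)_{k∈ℕ} real n×n matrices and (w_k)_{k∈ℕ} in ℝ^n satisfy x_{k+1} = Φ_k x_k + w_k for all k. Suppose: (a) whenever x_kᵀ P x_k > 1, one has ‖w_k‖ ≤ θ and −x_kᵀ Φ_kᵀ (P + M) Φ_k x_k + (ρ − γ)·x_kᵀ P x_k − θ² λ_max(P M⁻¹ P + P) + γ ≥ 0; (b) whenever x_kᵀ P x_k ≤ 1, one has ‖Φ_k‖ ≤ C' and ‖w_k‖ ≤ ϖ. Then, with μ = max(1, λ_max(P)·(C'/√(λ_min(P)) + ϖ)²), there exists K ∈ ℕ such that x_kᵀ P x_k ≤ μ for all k ≥ K; i.e., the trajectory converges to and remains in the ellipsoid E(P, μ). -/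

import Mathlib

/-!
`V(x) = xᵀ P x` is a Lyapunov function for the trajectory. Outside `E(P, 1)`, Young's
inequality `2 wᵀ P a ≤ aᵀ M a + wᵀ P M⁻¹ P w` turns the triggering condition into
`V(x_{k+1}) ≤ ρ V(x_k) - γ (V(x_k) - 1) ≤ ρ V(x_k)`, so the trajectory reaches `E(P, 1)` in
finite time. From inside `E(P, 1)`, `‖x_k‖ ≤ 1 / √λ_min(P)`, hence
`‖x_{k+1}‖ ≤ C' / √λ_min(P) + ϖ` and `V(x_{k+1}) ≤ λ_max(P) (C' / √λ_min(P) + ϖ)²`.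
Together the two cases make `E(P, μ)` forward invariant.
-/

open Matrix

/-- The identity map from plain vectors to Euclidean space (type synonym conversion). -/
noncomputable def toE {n : ℕ} (v : Fin n → ℝ) : EuclideanSpace ℝ (Fin n) :=
  (WithLp.equiv 2 (Fin n → ℝ)).symm v

lemma exists_le_of_contracting_above {V : ℕ → ℝ} {r ρ : ℝ} (hr : 0 < r) (hρ₀ : 0 ≤ ρ)
    (hρ₁ : ρ < 1) (hV : ∀ k, r < V k → V (k + 1) ≤ ρ * V k) : ∃ k, V k ≤ r := by
  by_contra! hall
  have hgeom : ∀ k, V k ≤ ρ ^ k * V 0 := by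
    intro k
    induction k with
    | zero => simp
    | succ k ih =>
      calc V (k + 1) ≤ ρ * V k := hV k (hall k)
        _ ≤ ρ * (ρ ^ k * V 0) := mul_le_mul_of_nonneg_left ih hρ₀
        _ = ρ ^ (k + 1) * V 0 := by ring
  have hlim : Filter.Tendsto (fun k => ρ ^ k * V 0) Filter.atTop (nhds 0) := by
    simpa using (tendsto_pow_atTop_nhds_zero_of_lt_one hρ₀ hρ₁).mul_const (V 0)
  obtain ⟨k, hk⟩ := (hlim.eventually (gt_mem_nhds hr)).exists
  linarith [hall k, hgeom k]

lemma exists_forall_ge_le_max_of_contracting_above {V : ℕ → ℝ} {r ρ c : ℝ} (hr : 0 < r)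
    (hρ₀ : 0 ≤ ρ) (hρ₁ : ρ < 1) (hout : ∀ k, r < V k → V (k + 1) ≤ ρ * V k)
    (hin : ∀ k, V k ≤ r → V (k + 1) ≤ c) : ∃ K, ∀ k ≥ K, V k ≤ max r c := by
  obtain ⟨K, hK⟩ := exists_le_of_contracting_above hr hρ₀ hρ₁ hout
  refine ⟨K, fun k hk => ?_⟩
  induction k, hk using Nat.le_induction with
  | base => exact hK.trans (le_max_left r c)
  | succ k _ ih =>
    rcases le_or_gt (V k) r with hle | hgt
    · exact (hin k hle).trans (le_max_right r c)
    · have : ρ * V k ≤ V k := mul_le_of_le_one_left (hr.trans hgt).le hρ₁.le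
      linarith [hout k hgt]

namespace Matrix

variable {ι : Type*} [Fintype ι]

lemma IsHermitian.dotProduct_mulVec_comm {A : Matrix ι ι ℝ} (hA : A.IsHermitian)
    (x y : ι → ℝ) : x ⬝ᵥ A *ᵥ y = y ⬝ᵥ A *ᵥ x := by
  simpa [(isHermitian_iff_isSymm.1 hA).eq] using dotProduct_transpose_mulVec A x y

variable [DecidableEq ι]

lemma PosDef.two_mul_dotProduct_le {M : Matrix ι ι ℝ} (hM : M.PosDef) (u a : ι → ℝ) :
    2 * (u ⬝ᵥ a) ≤ a ⬝ᵥ M *ᵥ a + u ⬝ᵥ M⁻¹ *ᵥ u := by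
  have hMinv : M *ᵥ M⁻¹ *ᵥ u = u := by
    rw [mulVec_mulVec, mul_nonsing_inv _ ((isUnit_iff_isUnit_det _).1 hM.isUnit), one_mulVec]
  have hcross : M⁻¹ *ᵥ u ⬝ᵥ M *ᵥ a = u ⬝ᵥ a := by
    rw [hM.1.dotProduct_mulVec_comm, hMinv, dotProduct_comm]
  have hsq := hM.posSemidef.dotProduct_mulVec_nonneg (a - M⁻¹ *ᵥ u)
  simp only [star_trivial, mulVec_sub, sub_dotProduct, dotProduct_sub, hMinv, hcross] at hsq
  rw [dotProduct_comm (M⁻¹ *ᵥ u) u, dotProduct_comm a u] at hsq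
  linarith

lemma IsHermitian.dotProduct_mulVec_eq_sum {A : Matrix ι ι ℝ} (hA : A.IsHermitian)
    (v : EuclideanSpace ℝ ι) :
    v ⬝ᵥ A *ᵥ v = ∑ i, hA.eigenvalues i * inner ℝ (hA.eigenvectorBasis i) v ^ 2 := by
  have hAv : A *ᵥ v = ∑ i, (hA.eigenvalues i * inner ℝ (hA.eigenvectorBasis i) v) •
      (hA.eigenvectorBasis i).ofLp := by
    conv_lhs => rw [← hA.eigenvectorBasis.sum_repr' v]
    simp [mulVec_sum, mulVec_smul, hA.mulVec_eigenvectorBasis, smul_smul, mul_comm]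
  rw [hAv, dotProduct_sum]
  refine Finset.sum_congr rfl fun i _ => ?_
  have hinner : v ⬝ᵥ hA.eigenvectorBasis i = inner ℝ (hA.eigenvectorBasis i) v := by
    simp [EuclideanSpace.inner_eq_star_dotProduct]
  rw [dotProduct_smul, smul_eq_mul, hinner]
  ring

lemma IsHermitian.dotProduct_mulVec_le {A : Matrix ι ι ℝ} (hA : A.IsHermitian)
    (v : EuclideanSpace ℝ ι) : v ⬝ᵥ A *ᵥ v ≤ (⨆ i, hA.eigenvalues i) * ‖v‖ ^ 2 := by
  rw [hA.dotProduct_mulVec_eq_sum, ← hA.eigenvectorBasis.sum_sq_inner_right,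
    Finset.mul_sum]
  gcongr with i
  exact le_ciSup (Finite.bddAbove_range _) i

lemma IsHermitian.le_dotProduct_mulVec {A : Matrix ι ι ℝ} (hA : A.IsHermitian)
    (v : EuclideanSpace ℝ ι) : (⨅ i, hA.eigenvalues i) * ‖v‖ ^ 2 ≤ v ⬝ᵥ A *ᵥ v := by
  rw [hA.dotProduct_mulVec_eq_sum, ← hA.eigenvectorBasis.sum_sq_inner_right,
    Finset.mul_sum]
  gcongr with i
  exact ciInf_le (Finite.bddBelow_range _) i

lemma PosSemidef.iSup_eigenvalues_nonneg {A : Matrix ι ι ℝ} (hA : A.PosSemidef) :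
    0 ≤ ⨆ i, hA.1.eigenvalues i :=
  Real.iSup_nonneg hA.eigenvalues_nonneg

lemma PosDef.iInf_eigenvalues_pos [Nonempty ι] {A : Matrix ι ι ℝ} (hA : A.PosDef) :
    0 < ⨅ i, hA.1.eigenvalues i := by
  obtain ⟨i, hi⟩ := exists_eq_ciInf_of_finite (f := hA.1.eigenvalues)
  exact hi ▸ hA.eigenvalues_pos i

lemma PosDef.norm_le_of_dotProduct_mulVec_le_one [Nonempty ι] {A : Matrix ι ι ℝ}
    (hA : A.PosDef) {v : EuclideanSpace ℝ ι} (hv : v ⬝ᵥ A *ᵥ v ≤ 1) :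
    ‖v‖ ≤ 1 / √(⨅ i, hA.1.eigenvalues i) := by
  have hpos := hA.iInf_eigenvalues_pos
  rw [le_div_iff₀ (Real.sqrt_pos.2 hpos), ← Real.sqrt_sq (norm_nonneg v),
    ← Real.sqrt_mul (sq_nonneg _), Real.sqrt_le_one]
  linarith [hA.1.le_dotProduct_mulVec v]

lemma PosDef.posSemidef_mul_inv_mul_add {P M : Matrix ι ι ℝ} (hP : P.PosDef) (hM : M.PosDef) :
    (P * M⁻¹ * P + P).PosSemidef := by
  have h := hM.posSemidef.inv.conjTranspose_mul_mul_same P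
  rw [hP.1.eq] at h
  exact h.add hP.posSemidef

lemma IsHermitian.dotProduct_mulVec_add_le {P M : Matrix ι ι ℝ} (hP : P.IsHermitian)
    (hM : M.PosDef) (hH : (P * M⁻¹ * P + P).IsHermitian) (a : ι → ℝ)
    (w : EuclideanSpace ℝ ι) :
    (a + w.ofLp) ⬝ᵥ P *ᵥ (a + w.ofLp) ≤
      a ⬝ᵥ (P + M) *ᵥ a + (⨆ i, hH.eigenvalues i) * ‖w‖ ^ 2 := by
  have hyoung := hM.two_mul_dotProduct_le (P *ᵥ w) a
  have hcross : P *ᵥ w ⬝ᵥ a = w ⬝ᵥ P *ᵥ a := by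
    rw [dotProduct_comm, hP.dotProduct_mulVec_comm]
  have hPMP : P *ᵥ w ⬝ᵥ M⁻¹ *ᵥ P *ᵥ w = w ⬝ᵥ (P * M⁻¹ * P) *ᵥ w := by
    rw [dotProduct_comm, hP.dotProduct_mulVec_comm, mulVec_mulVec, mulVec_mulVec]
  have hH_le := hH.dotProduct_mulVec_le w
  simp only [add_mulVec, mulVec_add, add_dotProduct, dotProduct_add] at hH_le ⊢
  rw [hP.dotProduct_mulVec_comm a w]
  linarith

end Matrix

lemma toE_mulVec {n : ℕ} (A : Matrix (Fin n) (Fin n) ℝ) (v : EuclideanSpace ℝ (Fin n)) :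
    toE (A *ᵥ v) = toEuclideanCLM (𝕜 := ℝ) A v := by
  conv_rhs => rw [← WithLp.toLp_ofLp 2 v]
  rw [toEuclideanCLM_toLp]
  rfl

lemma norm_toE_mulVec_add_le {n : ℕ} (A : Matrix (Fin n) (Fin n) ℝ)
    (v w : EuclideanSpace ℝ (Fin n)) :
    ‖toE (A *ᵥ v) + w‖ ≤ ‖toEuclideanCLM (𝕜 := ℝ) A‖ * ‖v‖ + ‖w‖ := by
  rw [toE_mulVec]
  exact (norm_add_le _ _).trans (by gcongr; exact (toEuclideanCLM (𝕜 := ℝ) A).le_opNorm v)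

theorem stmt13_general (n : ℕ) (hn : 1 ≤ n) (P M : Matrix (Fin n) (Fin n) ℝ)
    (hP : P.PosDef) (hM : M.PosDef)
    (γ ρ θ C' ϖ : ℝ) (hγ : 0 < γ) (hρ : ρ ∈ Set.Ioo (0 : ℝ) 1)
    (hH : (P * M⁻¹ * P + P).IsHermitian)
    (x : ℕ → EuclideanSpace ℝ (Fin n)) (Φ : ℕ → Matrix (Fin n) (Fin n) ℝ)
    (w : ℕ → EuclideanSpace ℝ (Fin n))
    (hdyn : ∀ k, x (k + 1) = toE ((Φ k).mulVec (x k)) + w k)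
    (ha : ∀ k, 1 < x k ⬝ᵥ P.mulVec (x k) → ‖w k‖ ≤ θ ∧
      0 ≤ -(((Φ k).mulVec (x k)) ⬝ᵥ (P + M).mulVec ((Φ k).mulVec (x k)))
        + (ρ - γ) * (x k ⬝ᵥ P.mulVec (x k)) - θ ^ 2 * (⨆ i, hH.eigenvalues i) + γ)
    (hb : ∀ k, x k ⬝ᵥ P.mulVec (x k) ≤ 1 →
      ‖Matrix.toEuclideanCLM (𝕜 := ℝ) (Φ k)‖ ≤ C' ∧ ‖w k‖ ≤ ϖ) :
    ∃ K : ℕ, ∀ k ≥ K, x k ⬝ᵥ P.mulVec (x k) ≤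
      max 1 ((⨆ i, hP.1.eigenvalues i) *
        (C' / Real.sqrt (⨅ i, hP.1.eigenvalues i) + ϖ) ^ 2) := by
  have : Nonempty (Fin n) := ⟨⟨0, hn⟩⟩
  have hlH : 0 ≤ ⨆ i, hH.eigenvalues i :=
    (hP.posSemidef_mul_inv_mul_add hM).iSup_eigenvalues_nonneg
  refine exists_forall_ge_le_max_of_contracting_above one_pos hρ.1.le hρ.2
    (fun k hk => ?_) (fun k hk => ?_)
  · obtain ⟨hw, htrig⟩ := ha k hk
    have hstep := hP.1.dotProduct_mulVec_add_le hM hH ((Φ k) *ᵥ x k) (w k)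
    have hw2 : ‖w k‖ ^ 2 ≤ θ ^ 2 := pow_le_pow_left₀ (norm_nonneg _) hw 2
    rw [hdyn k]
    simp only [toE, WithLp.equiv_symm_apply, WithLp.ofLp_add]
    linarith [mul_le_mul_of_nonneg_left hw2 hlH, mul_pos hγ (sub_pos.2 hk)]
  · obtain ⟨hΦ, hw⟩ := hb k hk
    have hx := hP.norm_le_of_dotProduct_mulVec_le_one hk
    have hnext : ‖x (k + 1)‖ ≤ C' / √(⨅ i, hP.1.eigenvalues i) + ϖ := by
      rw [hdyn k, div_eq_mul_one_div]
      refine (norm_toE_mulVec_add_le _ _ _).trans (add_le_add ?_ hw)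
      exact mul_le_mul_of_nonneg hΦ hx (norm_nonneg _) (by positivity)
    calc x (k + 1) ⬝ᵥ P *ᵥ x (k + 1) ≤ (⨆ i, hP.1.eigenvalues i) * ‖x (k + 1)‖ ^ 2 :=
          hP.1.dotProduct_mulVec_le _
      _ ≤ _ := by gcongr; exact hP.posSemidef.iSup_eigenvalues_nonneg

/-- Proposition 3 (online self-triggering mechanism, perturbed case), trajectory level:
outside the unit ellipsoid the triggering condition with decay `ρ` and disturbance
bound `θ` holds, inside it the sensor-free transition (`‖Φ_k‖ ≤ C'`, `‖w_k‖ ≤ ϖ`)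
is applied; then the trajectory converges to and remains in `E(P, μ)` with
`μ = max(1, λ_max(P)(C'/√(λ_min(P)) + ϖ)²)` — global uniform ultimate boundedness. -/
theorem stmt13 (n : ℕ) (hn : 1 ≤ n) (P M : Matrix (Fin n) (Fin n) ℝ)
    (hP : P.PosDef) (hM : M.PosDef)
    (γ ρ θ C' ϖ : ℝ) (hγ : 0 < γ) (hρ : ρ ∈ Set.Ioo (0 : ℝ) 1) (hθ : 0 ≤ θ)
    (hC' : 0 ≤ C') (hϖ : 0 ≤ ϖ)
    (hH : (P * M⁻¹ * P + P).IsHermitian)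
    (x : ℕ → EuclideanSpace ℝ (Fin n)) (Φ : ℕ → Matrix (Fin n) (Fin n) ℝ)
    (w : ℕ → EuclideanSpace ℝ (Fin n))
    (hdyn : ∀ k, x (k + 1) = toE ((Φ k).mulVec (x k)) + w k)
    (ha : ∀ k, 1 < x k ⬝ᵥ P.mulVec (x k) → ‖w k‖ ≤ θ ∧
      0 ≤ -(((Φ k).mulVec (x k)) ⬝ᵥ (P + M).mulVec ((Φ k).mulVec (x k)))
        + (ρ - γ) * (x k ⬝ᵥ P.mulVec (x k)) - θ ^ 2 * (⨆ i, hH.eigenvalues i) + γ)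
    (hb : ∀ k, x k ⬝ᵥ P.mulVec (x k) ≤ 1 →
      ‖Matrix.toEuclideanCLM (𝕜 := ℝ) (Φ k)‖ ≤ C' ∧ ‖w k‖ ≤ ϖ) :
    ∃ K : ℕ, ∀ k ≥ K, x k ⬝ᵥ P.mulVec (x k) ≤
      max 1 ((⨆ i, hP.1.eigenvalues i) *
        (C' / Real.sqrt (⨅ i, hP.1.eigenvalues i) + ϖ) ^ 2) :=
  stmt13_general n hn P M hP hM γ ρ θ C' ϖ hγ hρ hH x Φ w hdyn ha hb
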